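/- arXiv:2009.12209 — 2 statements merged into one kernel-verified Lean document; each statement's English description precedes it below -/
import Mathlib

section
/- For every tree T of order n ≥ 3 that is not isomorphic to the double star S_{2,2}, γ_{rI}(T) ≥ (n+3)/2. -/
open scoped Classical
open Finset

/-- A restrained Italian dominating function: values in {0,1,2}, every 0-vertex has
neighborhood weight ≥ 2, and every 0-vertex has a 0-neighbor. -/
def IsRIDF {V : Type*} [Fintype V] (G : SimpleGraph V) (f : V → ℕ) : Prop :=
  (∀ v, f v ≤ 2) ∧
  (∀ v, f v = 0 → 2 ≤ ∑ u ∈ Finset.univ.filter (fun u => G.Adj v u), f u) ∧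
  (∀ v, f v = 0 → ∃ u, G.Adj v u ∧ f u = 0)

/-- The restrained Italian domination number. -/
noncomputable def ridNum {V : Type*} [Fintype V] (G : SimpleGraph V) : ℕ :=
  sInf {w | ∃ f : V → ℕ, IsRIDF G f ∧ ∑ v, f v = w}

/-- A restrained dominating set. -/
def IsRDS {V : Type*} [Fintype V] (G : SimpleGraph V) (S : Finset V) : Prop :=
  (∀ v ∉ S, ∃ u ∈ S, G.Adj v u) ∧ (∀ v ∉ S, ∃ u ∉ S, G.Adj v u)

/-- The restrained domination number. -/
noncomputable def rdNum {V : Type*} [Fintype V] (G : SimpleGraph V) : ℕ :=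
  sInf {k | ∃ S : Finset V, IsRDS G S ∧ S.card = k}

/-- The double star `S_{2,2}`: centers 0,1; leaves 2,3 at 0 and 4,5 at 1. -/
def doubleStar22 : SimpleGraph (Fin 6) :=
  SimpleGraph.fromRel (fun a b =>
    (a = 0 ∧ b = 1) ∨ (a = 0 ∧ b = 2) ∨ (a = 0 ∧ b = 3) ∨ (a = 1 ∧ b = 4) ∨ (a = 1 ∧ b = 5))

/-!
Take an RID function `f` of minimum weight and let `Z`, `P`, `W` be the sets where `f` is zero,
nonzero and equal to `2`; write `e(A, B)` for the number of ordered adjacent pairs in `A × B`.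
The restrained condition gives `|Z| ≤ e(Z, Z)` and the Italian one `2|Z| ≤ e(Z, P) + e(Z, W)`.
Counting ordered edges of the tree gives `e(Z, Z) + 2 e(Z, P) ≤ 2(n - 1)`, and since `T` induces
a forest on `Z ∪ W`, also `e(Z, Z) + 2 e(Z, W) ≤ 2(|Z| + |W| - 1)`. As `n = |Z| + |P|` and the
weight is `|P| + |W|`, linear arithmetic gives `n + 3 ≤ 2 w(f)` except when `|Z| = 2`, `W = ∅`
and `n = 6`. Then the two zeros are adjacent and each has two neighbours of weight `1`, all
distinct because a tree has no triangle; this is a copy of `S_{2,2}` with as many edges as `T`.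
-/

namespace SimpleGraph

variable {V : Type*} (G : SimpleGraph V)

theorem card_interedges_eq_sum (s t : Finset V) :
    #(G.interedges s t) = ∑ v ∈ s, #{u ∈ t | G.Adj v u} := by
  rw [interedges, Rel.interedges_eq_biUnion, card_biUnion]
  · simp
  · intro x _ y _ hxy
    rw [Function.onFun, Finset.disjoint_left]
    simp only [mem_map]
    rintro _ ⟨a, -, rfl⟩ ⟨b, -, hb⟩
    exact hxy (congrArg Prod.fst hb).symm

theorem card_interedges_comm (s t : Finset V) : #(G.interedges s t) = #(G.interedges t s) :=
  have := G.symm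
  Rel.card_interedges_comm s t

theorem card_interedges_union_left {s₁ s₂ : Finset V} (h : Disjoint s₁ s₂) (t : Finset V) :
    #(G.interedges (s₁ ∪ s₂) t) = #(G.interedges s₁ t) + #(G.interedges s₂ t) := by
  rw [← card_union_of_disjoint (G.interedges_disjoint_left h t)]
  congr 1
  ext
  simp [mem_interedges_iff, or_and_right]

theorem card_interedges_add_two_mul_le {s t : Finset V} (h : Disjoint s t) :
    #(G.interedges s s) + 2 * #(G.interedges s t) ≤ #(G.interedges (s ∪ t) (s ∪ t)) := by
  have := G.card_interedges_union_left h (s ∪ t)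
  have := G.card_interedges_comm s (s ∪ t)
  have := G.card_interedges_comm t (s ∪ t)
  have := G.card_interedges_union_left h s
  have := G.card_interedges_union_left h t
  have := G.card_interedges_comm t s
  omega

theorem card_interedges_univ [Fintype V] : #(G.interedges univ univ) = 2 * #G.edgeFinset := by
  rw [two_mul_card_edgeFinset, interedges_def, univ_product_univ]

variable {G}

theorem IsAcyclic.card_edgeFinset_add_one_le [Fintype V] [Nonempty V] [Fintype G.edgeSet]
    (hG : G.IsAcyclic) : #G.edgeFinset + 1 ≤ Fintype.card V := by
  obtain ⟨F, hGF, -, hF⟩ := connected_top.exists_isTree_le_of_le_of_isAcyclic le_top hG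
  rw [← hF.card_edgeFinset]
  gcongr

theorem IsAcyclic.card_interedges_add_two_le (hG : G.IsAcyclic) {s : Finset V}
    (hs : s.Nonempty) : #(G.interedges s s) + 2 ≤ 2 * #s := by
  have : Nonempty (s : Set V) := hs.to_subtype
  have hforest := IsAcyclic.card_edgeFinset_add_one_le (hG.induce (s : Set V))
  simp only [SetLike.coe_sort_coe, Fintype.card_coe] at hforest
  have hdarts : 2 * #(G.induce (s : Set V)).edgeFinset = #(G.interedges s s) := by
    rw [two_mul_card_edgeFinset]
    refine card_bij (fun p _ => (p.1.1, p.2.1)) ?_ ?_ ?_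
    · rintro ⟨⟨x, hx⟩, ⟨y, hy⟩⟩ h
      exact G.mk_mem_interedges_iff.2 ⟨hx, hy, (mem_filter.1 h).2⟩
    · rintro ⟨⟨x, hx⟩, ⟨y, hy⟩⟩ _ ⟨⟨x', hx'⟩, ⟨y', hy'⟩⟩ _ h
      simp_all
    · rintro ⟨x, y⟩ h
      rw [mem_interedges_iff] at h
      exact ⟨(⟨x, h.1⟩, ⟨y, h.2.1⟩), by simpa using h.2.2, rfl⟩
  omega

theorem Hom.nonempty_iso_of_bijective {W : Type*} [Fintype W] {G : SimpleGraph V}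
    {H : SimpleGraph W} [Fintype G.edgeSet] [Fintype H.edgeSet] (φ : G →g H)
    (hφ : Function.Bijective φ) (hE : #H.edgeFinset ≤ #G.edgeFinset) : Nonempty (G ≃g H) := by
  let e := Equiv.ofBijective φ hφ
  have hle : G.map e ≤ H := by
    rintro _ _ ⟨-, a, b, hab, rfl, rfl⟩
    exact φ.map_adj hab
  have heq : G.map e = H := by
    rw [← edgeFinset_inj]
    refine eq_of_subset_of_card_le (edgeFinset_mono hle) ?_
    rw [← (Iso.map e G).card_edgeFinset_eq]
    exact hE
  exact heq ▸ ⟨Iso.map e G⟩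

end SimpleGraph

open SimpleGraph

-- A computable instance, so that `decide` can count the edges (the classical one does not reduce).
instance : DecidableRel doubleStar22.Adj := fun a b => by
  unfold doubleStar22 SimpleGraph.fromRel; infer_instance

theorem card_edgeFinset_doubleStar22 : #doubleStar22.edgeFinset = 5 := by decide

theorem SimpleGraph.IsTree.nonempty_iso_doubleStar22 {V : Type*} [Fintype V]
    {T : SimpleGraph V} (hT : T.IsTree) (hn : Fintype.card V = 6) {x y u₁ u₂ u₃ u₄ : V}
    (hxy : T.Adj x y) (hx₁ : T.Adj x u₁) (hx₂ : T.Adj x u₂) (hy₃ : T.Adj y u₃)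
    (hy₄ : T.Adj y u₄) (h₁₂ : u₁ ≠ u₂) (h₃₄ : u₃ ≠ u₄) (h₁ : u₁ ≠ y) (h₂ : u₂ ≠ y)
    (h₃ : u₃ ≠ x) (h₄ : u₄ ≠ x) : Nonempty (T ≃g doubleStar22) := by
  have hnotri : ∀ {a b c}, T.Adj a b → T.Adj a c → T.Adj b c → False := fun hab hac hbc =>
    hT.isAcyclic.cliqueFree le_rfl _ (is3Clique_triple_iff.2 ⟨hab, hac, hbc⟩)
  have h₁₃ : u₁ ≠ u₃ := fun h => hnotri hxy hx₁ (h ▸ hy₃)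
  have h₁₄ : u₁ ≠ u₄ := fun h => hnotri hxy hx₁ (h ▸ hy₄)
  have h₂₃ : u₂ ≠ u₃ := fun h => hnotri hxy hx₂ (h ▸ hy₃)
  have h₂₄ : u₂ ≠ u₄ := fun h => hnotri hxy hx₂ (h ▸ hy₄)
  have hinj : Function.Injective ![x, y, u₁, u₂, u₃, u₄] := by
    rw [← List.nodup_ofFn]
    simp [List.ofFn_succ, hxy.ne, hx₁.ne, hx₂.ne, hy₃.ne, hy₄.ne, h₁.symm, h₂.symm, h₃.symm,
      h₄.symm, h₁₂, h₁₃, h₁₄, h₂₃, h₂₄, h₃₄]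
  let φ : doubleStar22 →g T := ⟨![x, y, u₁, u₂, u₃, u₄], fun {i j} h => by
    obtain ⟨-, h | h⟩ := h <;>
    rcases h with ⟨rfl, rfl⟩ | ⟨rfl, rfl⟩ | ⟨rfl, rfl⟩ | ⟨rfl, rfl⟩ | ⟨rfl, rfl⟩ <;>
    simp [hxy, hx₁, hx₂, hy₃, hy₄, hxy.symm, hx₁.symm, hx₂.symm, hy₃.symm, hy₄.symm]⟩
  have hbij : Function.Bijective φ :=
    (Fintype.bijective_iff_injective_and_card φ).2 ⟨hinj, by simp [hn]⟩
  obtain ⟨e⟩ := φ.nonempty_iso_of_bijective hbij (by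
    rw [card_edgeFinset_doubleStar22]
    have := hT.card_edgeFinset
    omega)
  exact ⟨e.symm⟩

theorem Finset.sum_eq_card_ne_zero_add_card_eq_two {ι : Type*} (A : Finset ι) {f : ι → ℕ}
    (hf : ∀ i ∈ A, f i ≤ 2) : ∑ i ∈ A, f i = #{i ∈ A | f i ≠ 0} + #{i ∈ A | f i = 2} := by
  rw [card_filter, card_filter, ← sum_add_distrib]
  refine sum_congr rfl fun i hi => ?_
  have := hf i hi
  split_ifs <;> omega

namespace IsRIDF

variable {V : Type*} [Fintype V] {G : SimpleGraph V} {f : V → ℕ}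

theorem card_zero_le_card_interedges (hf : IsRIDF G f) :
    #{v | f v = 0} ≤ #(G.interedges {v | f v = 0} {v | f v = 0}) := by
  rw [card_interedges_eq_sum, card_eq_sum_ones]
  refine sum_le_sum fun v hv => ?_
  obtain ⟨u, huv, hu⟩ := hf.2.2 v (mem_filter.1 hv).2
  exact one_le_card.2 ⟨u, by simp [huv, hu]⟩

theorem sum_neighbors_eq (hf : IsRIDF G f) (v : V) :
    ∑ u ∈ univ.filter (G.Adj v), f u =
      #{u ∈ {w | f w ≠ 0} | G.Adj v u} + #{u ∈ {w | f w = 2} | G.Adj v u} := by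
  rw [sum_eq_card_ne_zero_add_card_eq_two _ fun u _ => hf.1 u, filter_comm, filter_comm (G.Adj v)]

theorem two_mul_card_zero_le (hf : IsRIDF G f) :
    2 * #{v | f v = 0} ≤
      #(G.interedges {v | f v = 0} {v | f v ≠ 0}) + #(G.interedges {v | f v = 0} {v | f v = 2}) := by
  rw [card_interedges_eq_sum, card_interedges_eq_sum, ← sum_add_distrib, mul_comm,
    ← smul_eq_mul, ← sum_const]
  refine sum_le_sum fun v hv => ?_
  rw [← hf.sum_neighbors_eq]
  exact hf.2.1 v (mem_filter.1 hv).2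

theorem one_lt_card_neighbors_ne_zero (hf : IsRIDF G f) (h2 : ∀ u, f u ≠ 2) {v : V}
    (hv : f v = 0) : 1 < #{u ∈ {w | f w ≠ 0} | G.Adj v u} := by
  have := hf.2.1 v hv
  simp only [hf.sum_neighbors_eq, h2, filter_false, filter_empty, card_empty, add_zero] at this
  exact this

theorem add_three_le_two_mul_sum_or {T : SimpleGraph V} (hT : T.IsTree)
    (hn : 3 ≤ Fintype.card V) (hf : IsRIDF T f) :
    Fintype.card V + 3 ≤ 2 * ∑ v, f v ∨
      #{v | f v = 0} = 2 ∧ #{v | f v = 2} = 0 ∧ Fintype.card V = 6 := by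
  set Z : Finset V := {v | f v = 0}
  set P : Finset V := {v | f v ≠ 0}
  set W : Finset V := {v | f v = 2}
  have hZP : Disjoint Z P := disjoint_filter_filter_not _ _ _
  have hZW : Disjoint Z W := disjoint_filter.2 fun v _ h0 h2 => by omega
  have hWP : W ⊆ P := monotone_filter_right _ fun v _ h2 => by omega
  have hcard : #Z + #P = Fintype.card V := card_filter_add_card_filter_not _
  have hweight : ∑ v, f v = #P + #W := sum_eq_card_ne_zero_add_card_eq_two _ fun v _ => hf.1 v
  have hrestrained : #Z ≤ #(T.interedges Z Z) := hf.card_zero_le_card_interedges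
  have hitalian : 2 * #Z ≤ #(T.interedges Z P) + #(T.interedges Z W) := hf.two_mul_card_zero_le
  have htree : #(T.interedges Z Z) + 2 * #(T.interedges Z P) + 2 ≤ 2 * Fintype.card V := by
    have := T.card_interedges_add_two_mul_le hZP
    have := card_le_card (T.interedges_mono (subset_univ (Z ∪ P)) (subset_univ (Z ∪ P)))
    have := T.card_interedges_univ
    have := hT.card_edgeFinset
    omega
  have hforest : 0 < #Z + #W →
      #(T.interedges Z Z) + 2 * #(T.interedges Z W) + 2 ≤ 2 * (#Z + #W) := fun h => by
    rw [← card_union_of_disjoint hZW] at h ⊢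
    have := T.card_interedges_add_two_mul_le hZW
    have := IsAcyclic.card_interedges_add_two_le hT.isAcyclic (card_pos.1 h)
    omega
  have hZW_le : #(T.interedges Z W) ≤ #(T.interedges Z P) :=
    card_le_card (T.interedges_mono subset_rfl hWP)
  have hW : #W = 0 → #(T.interedges Z W) = 0 := fun h => by
    rw [card_eq_zero.1 h, card_eq_zero]
    ext
    simp [mem_interedges_iff]
  -- For `W ≠ ∅` this yields `|Z| + 2 ≤ |P| + |W|`; for `W = ∅` it yields `3|Z| + 2 ≤ 2|P|` and
  -- `|Z| ≠ 1`, which leaves `|Z| = 2`, `|P| = 4` as the only exception.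
  omega

theorem nonempty_iso_doubleStar22 {T : SimpleGraph V} (hT : T.IsTree)
    (hn : Fintype.card V = 6) (hf : IsRIDF T f) (hZ : #{v | f v = 0} = 2)
    (hW : #{v | f v = 2} = 0) : Nonempty (T ≃g doubleStar22) := by
  have h2 : ∀ u, f u ≠ 2 := by simpa [filter_eq_empty_iff] using hW
  obtain ⟨x, y, -, hZxy⟩ := card_eq_two.1 hZ
  have hZ' : ∀ v, f v = 0 ↔ v = x ∨ v = y := by simpa [Finset.ext_iff] using hZxy
  have hx : f x = 0 := (hZ' x).2 (.inl rfl)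
  have hy : f y = 0 := (hZ' y).2 (.inr rfl)
  have hxy : T.Adj x y := by
    obtain ⟨u, hxu, hu⟩ := hf.2.2 x hx
    rcases (hZ' u).1 hu with rfl | rfl
    · exact absurd hxu T.irrefl
    · exact hxu
  obtain ⟨u₁, hu₁, u₂, hu₂, h₁₂⟩ := one_lt_card.1 (hf.one_lt_card_neighbors_ne_zero h2 hx)
  obtain ⟨u₃, hu₃, u₄, hu₄, h₃₄⟩ := one_lt_card.1 (hf.one_lt_card_neighbors_ne_zero h2 hy)
  simp only [mem_filter, mem_univ, true_and] at hu₁ hu₂ hu₃ hu₄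
  exact hT.nonempty_iso_doubleStar22 hn hxy hu₁.2 hu₂.2 hu₃.2 hu₄.2 h₁₂ h₃₄
    (fun h => hu₁.1 (h ▸ hy)) (fun h => hu₂.1 (h ▸ hy)) (fun h => hu₃.1 (h ▸ hx))
    (fun h => hu₄.1 (h ▸ hx))

end IsRIDF

theorem exists_isRIDF_sum_eq_ridNum {V : Type*} [Fintype V] (G : SimpleGraph V) :
    ∃ f, IsRIDF G f ∧ ∑ v, f v = ridNum G :=
  Nat.sInf_mem (s := {w | ∃ f : V → ℕ, IsRIDF G f ∧ ∑ v, f v = w}) ⟨Fintype.card V, fun _ => 1,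
    ⟨fun _ => by norm_num, fun _ h => absurd h one_ne_zero, fun _ h => absurd h one_ne_zero⟩,
    by simp⟩

theorem stmt4 {V : Type*} [Fintype V] (T : SimpleGraph V) (hT : T.IsTree)
    (hn : 3 ≤ Fintype.card V) (hns : ¬ Nonempty (T ≃g doubleStar22)) :
    ((Fintype.card V : ℚ) + 3) / 2 ≤ (ridNum T : ℚ) := by
  obtain ⟨f, hf, hweight⟩ := exists_isRIDF_sum_eq_ridNum T
  rcases hf.add_three_le_two_mul_sum_or hT hn with h | ⟨hZ, hW, h6⟩
  · rw [div_le_iff₀ two_pos]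
    exact_mod_cast hweight ▸ h.trans_eq (mul_comm _ _)
  · exact (hns (hf.nonempty_iso_doubleStar22 hT h6 hZ hW)).elim
end

section
/- For the cycle Cₖ with k ≥ 9, γ_{rI}(Cₖ) ≤ k − 2. -/
open scoped Classical
open Finset

/-! Label the vertices `0, 1, …, k - 1` of `Cₖ` by `2 0 0 2 0 0 2 0 0 2 1 1 … 1`. Every `0` lies
in a block `0 0` flanked by two `2`s, so it has a `0`-neighbour and a `2`-neighbour, and the
weight is `4 · 2 + (k - 10) = k - 2` (only `6` for `k = 9`, where the last `2` falls back onto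
vertex `0`). -/

open SimpleGraph

theorem ridNum_le_of_isRIDF {V : Type*} [Fintype V] {G : SimpleGraph V} {f : V → ℕ}
    (hf : IsRIDF G f) : ridNum G ≤ ∑ v, f v :=
  Nat.sInf_le ⟨f, hf, rfl⟩

theorem isRIDF_of_exists_adj {V : Type*} [Fintype V] {G : SimpleGraph V} {f : V → ℕ}
    (hle : ∀ v, f v ≤ 2) (htwo : ∀ v, f v = 0 → ∃ u, G.Adj v u ∧ f u = 2)
    (hzero : ∀ v, f v = 0 → ∃ u, G.Adj v u ∧ f u = 0) : IsRIDF G f := by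
  refine ⟨hle, fun v hv => ?_, hzero⟩
  obtain ⟨u, huv, hu⟩ := htwo v hv
  calc 2 = f u := hu.symm
    _ ≤ ∑ w ∈ univ.filter (G.Adj v), f w :=
      single_le_sum (fun _ _ => Nat.zero_le _) (mem_filter.mpr ⟨mem_univ u, huv⟩)

theorem cycleGraph_adj_of_val_eq_succ_mod {k : ℕ} (hk : 2 ≤ k) {u v : Fin k}
    (h : v.val = (u.val + 1) % k) : (cycleGraph k).Adj u v := by
  rw [cycleGraph_adj']
  right
  rw [Fin.val_sub, h]
  rcases (by omega : u.val + 1 < k ∨ u.val + 1 = k) with hu | hu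
  · rw [Nat.mod_eq_of_lt hu, show k - u.val + (u.val + 1) = k + 1 by omega, Nat.add_mod_left,
      Nat.mod_eq_of_lt hk]
  · rw [hu, Nat.mod_self, add_zero, show k - u.val = 1 by omega, Nat.mod_eq_of_lt hk]

theorem cycleGraph_adj_succ {k : ℕ} (hk : 2 ≤ k) (v : Fin k) :
    (cycleGraph k).Adj v ⟨(v.val + 1) % k, Nat.mod_lt _ v.pos⟩ :=
  cycleGraph_adj_of_val_eq_succ_mod hk rfl

theorem cycleGraph_adj_pred {k : ℕ} (hk : 2 ≤ k) (v : Fin k) (hv : v.val ≠ 0) :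
    (cycleGraph k).Adj v ⟨v.val - 1, by omega⟩ :=
  (cycleGraph_adj_of_val_eq_succ_mod hk <| by
    dsimp only; rw [Nat.mod_eq_of_lt (by omega)]; omega).symm

def cycleRIDF (i : ℕ) : ℕ := if 9 < i then 1 else if 3 ∣ i then 2 else 0

theorem cycleRIDF_le_two (i : ℕ) : cycleRIDF i ≤ 2 := by
  unfold cycleRIDF; split_ifs <;> omega

theorem cycleRIDF_eq_zero_iff {i : ℕ} : cycleRIDF i = 0 ↔ i ≤ 9 ∧ ¬ 3 ∣ i := by
  unfold cycleRIDF; split_ifs <;> grind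

theorem cycleRIDF_eq_two_iff {i : ℕ} : cycleRIDF i = 2 ↔ i ≤ 9 ∧ 3 ∣ i := by
  unfold cycleRIDF; split_ifs <;> grind

theorem isRIDF_cycleRIDF {k : ℕ} (hk : 9 ≤ k) :
    IsRIDF (cycleGraph k) (fun v => cycleRIDF v.val) := by
  have hk2 : 2 ≤ k := by omega
  refine isRIDF_of_exists_adj (fun v => cycleRIDF_le_two _) (fun v hv => ?_) (fun v hv => ?_)
    <;> rw [cycleRIDF_eq_zero_iff] at hv
    <;> obtain h | h : v.val % 3 = 1 ∨ v.val % 3 = 2 := by omega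
  -- `v.val ≡ 1 [MOD 3]`: a `2` before `v` and a `0` after it; `v.val ≡ 2`: the other way round; the
  -- successor of `8` is `9`, or `0` on `C₉`.
  · exact ⟨_, cycleGraph_adj_pred hk2 v (by omega),
      cycleRIDF_eq_two_iff.mpr (by dsimp only; omega)⟩
  · refine ⟨_, cycleGraph_adj_succ hk2 v, cycleRIDF_eq_two_iff.mpr ?_⟩
    dsimp only
    obtain hv' | hv' : v.val + 1 < k ∨ v.val + 1 = k := by omega
    · rw [Nat.mod_eq_of_lt hv']; omega
    · rw [hv', Nat.mod_self]; omega
  · refine ⟨_, cycleGraph_adj_succ hk2 v, cycleRIDF_eq_zero_iff.mpr ?_⟩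
    dsimp only
    rw [Nat.mod_eq_of_lt (by omega)]; omega
  · exact ⟨_, cycleGraph_adj_pred hk2 v (by omega),
      cycleRIDF_eq_zero_iff.mpr (by dsimp only; omega)⟩

theorem sum_range_cycleRIDF {k : ℕ} (hk : 10 ≤ k) : ∑ i ∈ range k, cycleRIDF i = k - 2 := by
  induction k, hk using Nat.le_induction with
  | base => decide
  | succ k hk ih => rw [sum_range_succ, ih, cycleRIDF, if_pos (by omega)]; omega

theorem sum_range_cycleRIDF_le {k : ℕ} (hk : 9 ≤ k) : ∑ i ∈ range k, cycleRIDF i ≤ k - 2 := by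
  obtain rfl | hk := hk.eq_or_lt
  · decide
  · exact (sum_range_cycleRIDF hk).le

theorem stmt18 (k : ℕ) (hk : 9 ≤ k) : ridNum (SimpleGraph.cycleGraph k) ≤ k - 2 :=
  calc ridNum (cycleGraph k) ≤ ∑ v : Fin k, cycleRIDF v :=
        ridNum_le_of_isRIDF (isRIDF_cycleRIDF hk)
    _ = ∑ i ∈ range k, cycleRIDF i := Fin.sum_univ_eq_sum_range _ _
    _ ≤ k - 2 := sum_range_cycleRIDF_le hk
end
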